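/- Let L be a finite geometric lattice and A*(L) its Orlik–Solomon algebra over a field. Then for every p ∈ L, dim A*(L)_p = (−1)^{r(p)} μ(0, p), where μ is the Möbius function of L. -/

import Mathlib

open scoped Classical

structure GeometricLattice (L : Type*) [Lattice L] [OrderBot L] [Fintype L] where
  rk : L → ℕ
  rk_bot : rk ⊥ = 0
  rk_strictMono : StrictMono rk
  rk_covby : ∀ {p q : L}, p ⋖ q → rk q = rk p + 1
  submodular : ∀ p q : L, rk (p ⊓ q) + rk (p ⊔ q) ≤ rk p + rk q
  atomistic : ∀ p : L, p ≠ ⊥ → ∃ S : Finset L, (∀ a ∈ S, IsAtom a) ∧ p = S.sup id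

variable (R : Type*) [CommRing R] (L : Type*) [Lattice L] [OrderBot L] [Fintype L]

/-- The type of atoms of `L`. -/
def Atoms : Type _ := {a : L // IsAtom a}

noncomputable instance : Fintype (Atoms L) := Subtype.fintype _

/-- A fixed enumeration of the elements of `L`, used only to order the atoms in
exterior-algebra sign computations. -/
noncomputable def elemIdx : L → ℕ := fun x => ((Fintype.equivFin L) x : ℕ)

/-- The underlying module of the exterior algebra `E^*(L)` on the atoms of `L`:
the free `R`-module with basis `e_S` for `S` a finite set of atoms. -/
def OSModule : Type _ := Finset (Atoms L) →₀ R

noncomputable instance : AddCommGroup (OSModule R L) := Finsupp.instAddCommGroup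
noncomputable instance : Module R (OSModule R L) := Finsupp.module _ _

/-- basis vector `e_S` -/
noncomputable def osE (S : Finset (Atoms L)) : OSModule R L := Finsupp.single S 1

/-- the sign exponent of `a` inside `S`. -/
noncomputable def delSign (S : Finset (Atoms L)) (a : Atoms L) : ℕ :=
  (S.filter (fun b => elemIdx L b.val < elemIdx L a.val)).card

/-- the Orlik–Solomon derivation `∂ e_S = ∑_j (-1)^{j-1} e_{S \ a_j}`. -/
noncomputable def osDel : OSModule R L →ₗ[R] OSModule R L :=
  Finsupp.lift (OSModule R L) R (Finset (Atoms L)) fun S =>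
    ∑ a ∈ S, ((-1 : R) ^ delSign L S a) • osE R L (S.erase a)

/-- number of inversions between `S` and `T` in the chosen ordering. -/
noncomputable def mulSign (S T : Finset (Atoms L)) : ℕ :=
  ((S ×ˢ T).filter (fun x => elemIdx L x.2.val < elemIdx L x.1.val)).card

/-- the exterior product on `E^*(L)`: `e_S ⋅ e_T = ± e_{S ∪ T}` if `S, T` are
disjoint, and `0` otherwise. -/
noncomputable def osMul : OSModule R L →ₗ[R] OSModule R L →ₗ[R] OSModule R L :=
  Finsupp.lift (OSModule R L →ₗ[R] OSModule R L) R (Finset (Atoms L)) fun S =>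
    Finsupp.lift (OSModule R L) R (Finset (Atoms L)) fun T =>
      if Disjoint S T then ((-1 : R) ^ mulSign L S T) • osE R L (S ∪ T) else 0

/-- a set of atoms is dependent if the rank of its join is less than its size. -/
def IsDepSet (gl : GeometricLattice L) (S : Finset (Atoms L)) : Prop :=
  gl.rk (S.sup fun a => a.val) < S.card

/-- The Orlik–Solomon ideal: the span of all products `e_T ⋅ ∂ e_S` for `S` a
dependent set of atoms (this spans the two-sided ideal generated by the `∂ e_S`). -/
noncomputable def osIdeal (gl : GeometricLattice L) : Submodule R (OSModule R L) :=
  Submodule.span R {x | ∃ (T S : Finset (Atoms L)), IsDepSet L gl S ∧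
    x = osMul R L (osE R L T) (osDel R L (osE R L S))}

/-- the `L`-homogeneous part of `E^*(L)` of order `p`: the span of the `e_S` with
`⋁ S = p`. -/
noncomputable def osPiece (p : L) : Submodule R (OSModule R L) :=
  Submodule.span R {x | ∃ S : Finset (Atoms L), (S.sup fun a => a.val) = p ∧ x = osE R L S}

/-!
The Orlik–Solomon ideal `I` is bigraded by the join and the size of monomials. Indeed, if a
dependent set `S` has a one-element deletion `S ∖ b` with smaller join, then `S ∖ b` is dependent
and `∂ e_S = ± (e_{S ∖ b} - e_b ∂ e_{S ∖ b})`; otherwise all terms of `∂ e_S` have the same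
bidegree. So `A(L)_l` splits by size, and only size `r(l)` survives: fewer atoms cannot reach
rank `r(l)`, and more atoms are dependent, so that `e_S ∈ I`.

For `q ≠ ⊥` pick an atom `a ≤ q`. Left multiplication by `e_a` is a contracting homotopy for `∂`
on the span of the monomials with join `≤ q`, and it preserves `I`, so the complex
`⊕_{l ≤ q} A(L)_l` is exact and its Euler characteristic `∑_{l ≤ q} (-1)^{r(l)} dim A(L)_l`
vanishes. Together with `dim A(L)_⊥ = 1` this is the recursion that determines `μ`.
-/

open Module

namespace Finsupp

section Semiring

variable {R M ι J : Type*} [Semiring R] [AddCommMonoid M] [Module R M]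

def IsHomogeneous (v : ι → J) (W : Submodule R (ι →₀ M)) : Prop :=
  ∀ j, ∀ x ∈ W, x.filter (fun i => v i = j) ∈ W

theorem isHomogeneous_span {v : ι → J} {G : Set (ι →₀ M)}
    (hG : ∀ g ∈ G, ∃ j, g ∈ supported M R (v ⁻¹' {j})) :
    IsHomogeneous v (Submodule.span R G) := by
  intro j x hx
  induction hx using Submodule.span_induction with
  | mem g hg =>
    obtain ⟨j', hj'⟩ := hG g hg
    rw [mem_supported'] at hj'
    by_cases hjj : j' = j
    · subst hjj
      rw [(filter_eq_self_iff (fun i => v i = j') g).2 fun i hi => not_not.1 (mt (hj' i) hi)]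
      exact Submodule.subset_span hg
    · rw [(filter_eq_zero_iff (fun i => v i = j) g).2 fun i hi =>
        hj' i (by simpa [hi] using Ne.symm hjj)]
      exact Submodule.zero_mem _
  | zero => rw [filter_zero]; exact Submodule.zero_mem _
  | add x y _ _ hx hy => rw [filter_add]; exact Submodule.add_mem _ hx hy
  | smul a x _ hx => rw [filter_smul]; exact Submodule.smul_mem _ a hx

end Semiring

section Field

variable {K ι J : Type*} [Field K] {v : ι → J} {W : Submodule K (ι →₀ K)}

theorem disjoint_map_mkQ_supported (hW : IsHomogeneous v W) {j : J} {s : Set J} (hj : j ∉ s) :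
    Disjoint ((supported K K (v ⁻¹' {j})).map W.mkQ) ((supported K K (v ⁻¹' s)).map W.mkQ) := by
  rw [Submodule.disjoint_def]
  rintro _ ⟨x, hx, rfl⟩ ⟨y, hy, hxy⟩
  rw [SetLike.mem_coe, mem_supported'] at hx hy
  have hfx : x.filter (fun i => v i = j) = x :=
    (filter_eq_self_iff _ x).2 fun i hi => not_not.1 (mt (hx i) hi)
  have hfy : y.filter (fun i => v i = j) = 0 :=
    (filter_eq_zero_iff _ y).2 fun i hi => hy i (by simpa [hi] using hj)
  have := hW j _ ((Submodule.Quotient.eq W).1 hxy.symm)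
  rw [filter_sub, hfx, hfy, sub_zero] at this
  exact (Submodule.Quotient.mk_eq_zero W).2 this

theorem finrank_map_mkQ_supported [Finite ι] (hW : IsHomogeneous v W) (s : Finset J) :
    finrank K ((supported K K (v ⁻¹' s)).map W.mkQ) =
      ∑ j ∈ s, finrank K ((supported K K (v ⁻¹' {j})).map W.mkQ) := by
  induction s using Finset.induction_on with
  | empty => simp
  | insert j s hj ih =>
    have hsum := Submodule.finrank_sup_add_finrank_inf_eq
      ((supported K K (v ⁻¹' {j})).map W.mkQ) ((supported K K (v ⁻¹' s)).map W.mkQ)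
    rw [(disjoint_map_mkQ_supported hW (s := s) hj).eq_bot, finrank_bot, add_zero,
      ← Submodule.map_sup, ← supported_union, ← Set.preimage_union, ← Set.insert_eq] at hsum
    rw [Finset.sum_insert hj, ← ih, Finset.coe_insert, hsum]

end Field

end Finsupp

theorem Submodule.map_mapQ_map_mkQ {R M : Type*} [Ring R] [AddCommGroup M] [Module R M]
    (p : Submodule R M) (f : M →ₗ[R] M) (hf : p ≤ p.comap f) (P : Submodule R M) :
    (P.map p.mkQ).map (p.mapQ p f hf) = (P.map f).map p.mkQ := by
  rw [← Submodule.map_comp, Submodule.mapQ_mkQ, Submodule.map_comp]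

theorem Submodule.finrank_map_add_finrank_inf_ker {K V V₂ : Type*} [Field K] [AddCommGroup V]
    [Module K V] [AddCommGroup V₂] [Module K V₂] [FiniteDimensional K V]
    (f : V →ₗ[K] V₂) (p : Submodule K V) :
    finrank K (p.map f) + finrank K ↥(p ⊓ LinearMap.ker f) = finrank K p := by
  rw [← LinearMap.range_domRestrict, ← (f.domRestrict p).finrank_range_add_finrank_ker,
    LinearMap.ker_domRestrict, ← Submodule.map_comap_subtype, Submodule.finrank_map_subtype_eq]

section Homotopy

variable {K V : Type*} [Field K] [AddCommGroup V] [Module K V] [FiniteDimensional K V]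
  {W : ℕ → Submodule K V} {d h : V →ₗ[K] V}

theorem sum_range_neg_one_pow_mul_finrank_eq
    (hdh : d ∘ₗ h + h ∘ₗ d = LinearMap.id) (hh : h ∘ₗ h = 0)
    (hWh : ∀ k, (W k).map h ≤ W (k + 1)) (hWd : ∀ k, (W (k + 1)).map d ≤ W k)
    (hW₀ : (W 0).map d = ⊥) (n : ℕ) :
    ∑ k ∈ Finset.range (n + 1), (-1 : ℤ) ^ k * finrank K (W k) =
      (-1) ^ n * finrank K ((W n).map h) := by
  have hx : ∀ x ∈ LinearMap.ker h, h (d x) = x := fun x hx => by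
    simpa [LinearMap.mem_ker.1 hx] using LinearMap.congr_fun hdh x
  have hker : ∀ k, W (k + 1) ⊓ LinearMap.ker h = (W k).map h := fun k => by
    refine le_antisymm (fun x ⟨hxW, hxk⟩ => hx x hxk ▸ ⟨d x, hWd k ⟨x, hxW, rfl⟩, rfl⟩) ?_
    rintro _ ⟨y, hy, rfl⟩
    exact ⟨hWh k ⟨y, hy, rfl⟩, LinearMap.congr_fun hh y⟩
  have hker₀ : W 0 ⊓ LinearMap.ker h = ⊥ := by
    refine eq_bot_iff.2 fun x ⟨hxW, hxk⟩ => ?_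
    have : d x = 0 := by simpa [hW₀] using Submodule.mem_map_of_mem (f := d) hxW
    rw [Submodule.mem_bot, ← hx x hxk, this, map_zero]
  induction n with
  | zero =>
    have := Submodule.finrank_map_add_finrank_inf_ker h (W 0)
    rw [hker₀, finrank_bot, add_zero] at this
    simp [this]
  | succ n ih =>
    have := Submodule.finrank_map_add_finrank_inf_ker h (W (n + 1))
    rw [hker n] at this
    rw [Finset.sum_range_succ, ih, ← this, pow_succ]
    push_cast
    ring

theorem sum_range_neg_one_pow_mul_finrank_eq_zero
    (hdh : d ∘ₗ h + h ∘ₗ d = LinearMap.id) (hh : h ∘ₗ h = 0)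
    (hWh : ∀ k, (W k).map h ≤ W (k + 1)) (hWd : ∀ k, (W (k + 1)).map d ≤ W k)
    (hW₀ : (W 0).map d = ⊥) {n : ℕ} (hn : W (n + 1) = ⊥) :
    ∑ k ∈ Finset.range (n + 1), (-1 : ℤ) ^ k * finrank K (W k) = 0 := by
  have hWn : (W n).map h = ⊥ := eq_bot_iff.2 (hn ▸ hWh n)
  rw [sum_range_neg_one_pow_mul_finrank_eq hdh hh hWh hWd hW₀, hWn, finrank_bot, Nat.cast_zero,
    mul_zero]

end Homotopy

theorem eq_of_eq_bot_of_sum_filter_le_eq_zero {α M : Type*} [PartialOrder α] [OrderBot α]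
    [Fintype α] [AddCommGroup M] {f g : α → M} (hbot : f ⊥ = g ⊥)
    (hf : ∀ q ≠ ⊥, ∑ l ∈ Finset.univ.filter (· ≤ q), f l = 0)
    (hg : ∀ q ≠ ⊥, ∑ l ∈ Finset.univ.filter (· ≤ q), g l = 0) : f = g := by
  funext q
  induction q using WellFoundedLT.induction with
  | _ q ih =>
    rcases eq_or_ne q ⊥ with rfl | hq
    · exact hbot
    have hmem : q ∈ Finset.univ.filter (· ≤ q) := by simp
    have hf' := hf q hq
    have hg' := hg q hq
    rw [← Finset.add_sum_erase _ _ hmem] at hf' hg'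
    have hlt : ∀ l ∈ (Finset.univ.filter (· ≤ q)).erase q, f l = g l := fun l hl => by
      simp only [Finset.mem_erase, Finset.mem_filter, Finset.mem_univ, true_and] at hl
      exact ih l (lt_of_le_of_ne hl.2 hl.1)
    rw [Finset.sum_congr rfl hlt] at hf'
    exact add_right_cancel (hf'.trans hg'.symm)

variable {R L}

section Exterior

instance : Module.Finite R (OSModule R L) :=
  inferInstanceAs (Module.Finite R (Finset (Atoms L) →₀ R))

theorem osMul_osE_osE (S T : Finset (Atoms L)) :
    osMul R L (osE R L S) (osE R L T) =
      if Disjoint S T then ((-1 : R) ^ mulSign L S T) • osE R L (S ∪ T) else 0 := by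
  unfold osMul osE
  erw [Finsupp.lift_apply, Finsupp.sum_single_index (a := S) (zero_smul _ _), one_smul]
  erw [Finsupp.lift_apply, Finsupp.sum_single_index (by simp), one_smul]

theorem osDel_osE (S : Finset (Atoms L)) :
    osDel R L (osE R L S) = ∑ a ∈ S, ((-1 : R) ^ delSign L S a) • osE R L (S.erase a) := by
  unfold osDel osE
  erw [Finsupp.lift_apply, Finsupp.sum_single_index (by simp), one_smul]

omit [Fintype L] in
theorem OSModule.linearMap_ext {M : Type*} [AddCommGroup M] [Module R M]
    {f g : OSModule R L →ₗ[R] M} (h : ∀ S, f (osE R L S) = g (osE R L S)) : f = g := by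
  refine Finsupp.lhom_ext fun S b => ?_
  have hS : (Finsupp.single S b : OSModule R L) = b • osE R L S := by
    unfold osE; erw [Finsupp.smul_single, smul_eq_mul, mul_one]
  erw [hS, map_smul, map_smul]
  exact congrArg (b • ·) (h S)

theorem mulSign_singleton_left (a : Atoms L) (S : Finset (Atoms L)) :
    mulSign L {a} S = delSign L S a := by
  unfold mulSign delSign
  rw [Finset.singleton_product, Finset.filter_map, Finset.card_map]
  rfl

theorem mulSign_union_left {T U V : Finset (Atoms L)} (h : Disjoint T U) :
    mulSign L (T ∪ U) V = mulSign L T V + mulSign L U V := by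
  unfold mulSign
  rw [Finset.union_product, Finset.filter_union, Finset.card_union_of_disjoint]
  exact Finset.disjoint_filter_filter (Finset.disjoint_product.2 (Or.inl h))

theorem mulSign_union_right {T U V : Finset (Atoms L)} (h : Disjoint U V) :
    mulSign L T (U ∪ V) = mulSign L T U + mulSign L T V := by
  unfold mulSign
  rw [Finset.product_union, Finset.filter_union, Finset.card_union_of_disjoint]
  exact Finset.disjoint_filter_filter (Finset.disjoint_product.2 (Or.inr h))

theorem delSign_insert {a : Atoms L} {S : Finset (Atoms L)} (ha : a ∉ S) (c : Atoms L) :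
    delSign L (insert a S) c =
      delSign L S c + if elemIdx L a.val < elemIdx L c.val then 1 else 0 := by
  unfold delSign
  rw [Finset.filter_insert]
  split
  · rw [Finset.card_insert_of_notMem (by simp [ha])]
  · simp

theorem delSign_erase_self (S : Finset (Atoms L)) (a : Atoms L) :
    delSign L (S.erase a) a = delSign L S a := by
  unfold delSign
  rw [Finset.filter_erase, Finset.erase_eq_of_notMem (by simp)]

/-- The two signs with which `e_{(S ∖ b) ∪ a}` occurs in `∂ (e_a e_S)` and in `e_a ∂ e_S`
differ by exactly one transposition. -/
theorem delSign_add_delSign_insert {a b : Atoms L} {S : Finset (Atoms L)} (ha : a ∉ S)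
    (hb : b ∈ S) :
    delSign L S a + delSign L (insert a S) b = delSign L S b + delSign L (S.erase b) a + 1 := by
  have hab : elemIdx L a.val ≠ elemIdx L b.val := fun h =>
    ha (Subtype.ext ((Fintype.equivFin L).injective (Fin.ext h)) ▸ hb)
  have hSa := delSign_insert (Finset.notMem_erase b S) a
  rw [Finset.insert_erase hb] at hSa
  rw [hSa, delSign_insert ha b]
  rcases hab.lt_or_gt with h | h <;> simp [h, h.not_gt] <;> omega

end Exterior

section MulLeft

variable (R) in
noncomputable abbrev osMulLeft (T : Finset (Atoms L)) : OSModule R L →ₗ[R] OSModule R L :=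
  osMul R L (osE R L T)

theorem osMulLeft_osE (T S : Finset (Atoms L)) :
    osMulLeft R T (osE R L S) =
      if Disjoint T S then ((-1 : R) ^ mulSign L T S) • osE R L (T ∪ S) else 0 :=
  osMul_osE_osE T S

theorem osMulLeft_empty : osMulLeft R (∅ : Finset (Atoms L)) = LinearMap.id :=
  OSModule.linearMap_ext fun S => by simp [osMulLeft_osE, mulSign]

theorem osMulLeft_comp_osMulLeft {T U : Finset (Atoms L)} (h : Disjoint T U) :
    osMulLeft R T ∘ₗ osMulLeft R U = ((-1 : R) ^ mulSign L T U) • osMulLeft R (T ∪ U) := by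
  refine OSModule.linearMap_ext fun V => ?_
  rw [LinearMap.comp_apply, LinearMap.smul_apply, osMulLeft_osE U, osMulLeft_osE (T ∪ U)]
  by_cases hUV : Disjoint U V
  · by_cases hTV : Disjoint T V
    · have hTUV : Disjoint T (U ∪ V) := Finset.disjoint_union_right.2 ⟨h, hTV⟩
      rw [if_pos hUV, if_pos (Finset.disjoint_union_left.2 ⟨hTV, hUV⟩), map_smul,
        osMulLeft_osE, if_pos hTUV, smul_smul, smul_smul, ← pow_add, ← pow_add,
        mulSign_union_right hUV, mulSign_union_left h, Finset.union_assoc]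
      ring_nf
    · rw [if_pos hUV, if_neg (by simp [Finset.disjoint_union_left, hTV]), map_smul,
        osMulLeft_osE, if_neg (by simp [Finset.disjoint_union_right, hTV]), smul_zero, smul_zero]
  · rw [if_neg hUV, if_neg (by simp [Finset.disjoint_union_left, hUV]), map_zero, smul_zero]

theorem osMulLeft_comp_osMulLeft_of_not_disjoint {T U : Finset (Atoms L)} (h : ¬Disjoint T U) :
    osMulLeft R T ∘ₗ osMulLeft R U = 0 := by
  refine OSModule.linearMap_ext fun V => ?_
  rw [LinearMap.comp_apply, osMulLeft_osE U]
  split_ifs with hUV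
  · rw [map_smul, osMulLeft_osE, if_neg (by simp [Finset.disjoint_union_right, h]), smul_zero]
    rfl
  · rw [map_zero]
    rfl

theorem osMulLeft_eq_smul_comp {T : Finset (Atoms L)} {t : Atoms L} (ht : t ∈ T) :
    osMulLeft R T =
      ((-1 : R) ^ mulSign L {t} (T.erase t)) • (osMulLeft R {t} ∘ₗ osMulLeft R (T.erase t)) := by
  rw [osMulLeft_comp_osMulLeft (Finset.disjoint_singleton_left.2 (Finset.notMem_erase t T)),
    smul_smul, ← pow_add, Even.neg_one_pow ⟨_, rfl⟩, one_smul, ← Finset.insert_eq,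
    Finset.insert_erase ht]

theorem osE_eq_osMulLeft (S : Finset (Atoms L)) : osE R L S = osMulLeft R S (osE R L ∅) := by
  simp [osMulLeft_osE, mulSign]

theorem osE_eq_smul_osMulLeft_erase {a : Atoms L} {S : Finset (Atoms L)} (ha : a ∈ S) :
    osE R L S = ((-1 : R) ^ mulSign L {a} (S.erase a)) • osMulLeft R {a} (osE R L (S.erase a)) := by
  conv_lhs => rw [osE_eq_osMulLeft, osMulLeft_eq_smul_comp ha]
  rw [LinearMap.smul_apply, LinearMap.comp_apply, ← osE_eq_osMulLeft]

theorem osMulLeft_singleton_osDel_osE_of_mem {a : Atoms L} {S : Finset (Atoms L)} (ha : a ∈ S) :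
    osMulLeft R {a} (osDel R L (osE R L S)) = osE R L S := by
  rw [osDel_osE, map_sum, Finset.sum_eq_single_of_mem a ha]
  · rw [map_smul, osMulLeft_osE, if_pos (by simp), mulSign_singleton_left, ← Finset.insert_eq,
      Finset.insert_erase ha, smul_smul, ← pow_add, delSign_erase_self, Even.neg_one_pow ⟨_, rfl⟩,
      one_smul]
  · intro b hb hba
    rw [map_smul, osMulLeft_osE, if_neg (by simp [hba.symm, ha]), smul_zero]

theorem osDel_osMulLeft_singleton_osE_add_of_notMem {a : Atoms L} {S : Finset (Atoms L)}
    (ha : a ∉ S) :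
    osDel R L (osMulLeft R {a} (osE R L S)) + osMulLeft R {a} (osDel R L (osE R L S)) =
      osE R L S := by
  have hmul : osMulLeft R {a} (osE R L S) = ((-1 : R) ^ delSign L S a) • osE R L (insert a S) := by
    rw [osMulLeft_osE, if_pos (Finset.disjoint_singleton_left.2 ha), mulSign_singleton_left,
      Finset.insert_eq]
  have hdel : osDel R L (osMulLeft R {a} (osE R L S)) = osE R L S +
      ∑ b ∈ S, ((-1 : R) ^ (delSign L S a + delSign L (insert a S) b)) •
        osE R L (insert a (S.erase b)) := by
    rw [hmul, map_smul, osDel_osE, Finset.sum_insert ha, Finset.erase_insert ha,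
      delSign_insert ha, if_neg (lt_irrefl _), add_zero, smul_add, smul_smul, ← pow_add,
      Even.neg_one_pow ⟨_, rfl⟩, one_smul, Finset.smul_sum]
    refine congrArg _ (Finset.sum_congr rfl fun b hb => ?_)
    rw [smul_smul, ← pow_add, Finset.erase_insert_of_ne fun h : a = b => ha (h ▸ hb)]
  have hmulDel : osMulLeft R {a} (osDel R L (osE R L S)) =
      ∑ b ∈ S, ((-1 : R) ^ (delSign L S b + delSign L (S.erase b) a)) •
        osE R L (insert a (S.erase b)) := by
    rw [osDel_osE, map_sum]
    refine Finset.sum_congr rfl fun b _ => ?_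
    rw [map_smul, osMulLeft_osE, if_pos (by simp [ha]), mulSign_singleton_left,
      ← Finset.insert_eq, smul_smul, ← pow_add]
  rw [hdel, hmulDel, add_assoc, ← Finset.sum_add_distrib, add_eq_left]
  refine Finset.sum_eq_zero fun b hb => ?_
  rw [← add_smul, delSign_add_delSign_insert ha hb, pow_succ, mul_neg_one, neg_add_cancel,
    zero_smul]

theorem osDel_comp_osMulLeft_add (a : Atoms L) :
    osDel R L ∘ₗ osMulLeft R {a} + osMulLeft R {a} ∘ₗ osDel R L = LinearMap.id := by
  refine OSModule.linearMap_ext fun S => ?_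
  rw [LinearMap.add_apply, LinearMap.comp_apply, LinearMap.comp_apply, LinearMap.id_apply]
  by_cases ha : a ∈ S
  · rw [osMulLeft_osE, if_neg (by simpa using ha), map_zero, zero_add,
      osMulLeft_singleton_osDel_osE_of_mem ha]
  · exact osDel_osMulLeft_singleton_osE_add_of_notMem ha

theorem osDel_osMulLeft_singleton (a : Atoms L) (x : OSModule R L) :
    osDel R L (osMulLeft R {a} x) = x - osMulLeft R {a} (osDel R L x) :=
  eq_sub_of_add_eq (LinearMap.congr_fun (osDel_comp_osMulLeft_add a) x)

theorem osDel_comp_osDel : osDel R L ∘ₗ osDel R L = 0 := by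
  refine OSModule.linearMap_ext fun S => ?_
  induction S using Finset.strongInductionOn with
  | _ S ih =>
    rcases S.eq_empty_or_nonempty with rfl | ⟨a, ha⟩
    · simp [osDel_osE]
    rw [LinearMap.comp_apply, osE_eq_smul_osMulLeft_erase ha, map_smul, map_smul,
      osDel_osMulLeft_singleton, map_sub, osDel_osMulLeft_singleton, sub_sub_cancel,
      ← LinearMap.comp_apply (osDel R L), ih _ (Finset.erase_ssubset ha)]
    simp

end MulLeft

namespace GeometricLattice

variable (gl : GeometricLattice L)

theorem rk_atom (a : Atoms L) : gl.rk a.val = 1 := by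
  rw [gl.rk_covby a.2.bot_covBy, gl.rk_bot]

theorem rk_sup_le (x y : L) : gl.rk (x ⊔ y) ≤ gl.rk x + gl.rk y :=
  le_of_add_le_right (gl.submodular x y)

theorem rk_sup_le_card (S : Finset (Atoms L)) : gl.rk (S.sup fun a => a.val) ≤ S.card := by
  induction S using Finset.induction_on with
  | empty => simp [gl.rk_bot]
  | insert a S ha ih =>
    rw [Finset.sup_insert, Finset.card_insert_of_notMem ha]
    have := gl.rk_sup_le a.val (S.sup fun a => a.val)
    rw [gl.rk_atom] at this
    omega

end GeometricLattice

namespace IsDepSet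

variable {gl : GeometricLattice L} {S : Finset (Atoms L)}

theorem erase (hS : IsDepSet L gl S) {b : Atoms L} (hb : b ∈ S)
    (hne : ((S.erase b).sup fun a => a.val) ≠ S.sup fun a => a.val) :
    IsDepSet L gl (S.erase b) := by
  unfold IsDepSet at *
  have := gl.rk_strictMono (lt_of_le_of_ne (Finset.sup_mono (Finset.erase_subset b S)) hne)
  rw [Finset.card_erase_of_mem hb]
  omega

theorem two_le_card (hS : IsDepSet L gl S) : 2 ≤ S.card := by
  unfold IsDepSet at hS
  by_contra! h
  interval_cases hc : S.card
  · omega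
  · obtain ⟨a, rfl⟩ := Finset.card_eq_one.1 hc
    rw [Finset.sup_singleton, gl.rk_atom] at hS
    omega

end IsDepSet

section Ideal

variable {gl : GeometricLattice L}

theorem osMulLeft_mem_osIdeal (T : Finset (Atoms L)) {x : OSModule R L}
    (hx : x ∈ osIdeal R L gl) : osMulLeft R T x ∈ osIdeal R L gl := by
  induction hx using Submodule.span_induction with
  | mem y hy =>
    obtain ⟨T', S, hS, rfl⟩ := hy
    rw [← LinearMap.comp_apply]
    by_cases h : Disjoint T T'
    · rw [osMulLeft_comp_osMulLeft h, LinearMap.smul_apply]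
      exact Submodule.smul_mem _ _ (Submodule.subset_span ⟨_, S, hS, rfl⟩)
    · rw [osMulLeft_comp_osMulLeft_of_not_disjoint h]
      exact Submodule.zero_mem _
  | zero => simp
  | add x y _ _ hx hy => rw [map_add]; exact Submodule.add_mem _ hx hy
  | smul c x _ hx => rw [map_smul]; exact Submodule.smul_mem _ c hx

theorem osE_mem_osIdeal {S : Finset (Atoms L)} (hS : IsDepSet L gl S) :
    osE R L S ∈ osIdeal R L gl := by
  obtain ⟨a, ha⟩ : S.Nonempty := Finset.card_pos.1 (by have := hS.two_le_card; omega)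
  rw [← osMulLeft_singleton_osDel_osE_of_mem ha]
  exact Submodule.subset_span ⟨{a}, S, hS, rfl⟩

theorem osDel_osMulLeft_mem_osIdeal {y : OSModule R L} (hy : y ∈ osIdeal R L gl)
    (hdy : osDel R L y ∈ osIdeal R L gl) (T : Finset (Atoms L)) :
    osDel R L (osMulLeft R T y) ∈ osIdeal R L gl := by
  induction T using Finset.strongInductionOn with
  | _ T ih =>
    rcases T.eq_empty_or_nonempty with rfl | ⟨t, ht⟩
    · rwa [osMulLeft_empty]
    rw [osMulLeft_eq_smul_comp ht, LinearMap.smul_apply, LinearMap.comp_apply, map_smul,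
      osDel_osMulLeft_singleton]
    exact Submodule.smul_mem _ _ (Submodule.sub_mem _ (osMulLeft_mem_osIdeal _ hy)
      (osMulLeft_mem_osIdeal _ (ih _ (Finset.erase_ssubset ht))))

theorem osDel_mem_osIdeal {x : OSModule R L} (hx : x ∈ osIdeal R L gl) :
    osDel R L x ∈ osIdeal R L gl := by
  induction hx using Submodule.span_induction with
  | mem y hy =>
    obtain ⟨T, S, hS, rfl⟩ := hy
    have hdd : osDel R L (osDel R L (osE R L S)) = 0 :=
      LinearMap.congr_fun osDel_comp_osDel (osE R L S)
    have hdS : osMulLeft R ∅ (osDel R L (osE R L S)) ∈ osIdeal R L gl :=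
      Submodule.subset_span ⟨∅, S, hS, rfl⟩
    rw [osMulLeft_empty] at hdS
    exact osDel_osMulLeft_mem_osIdeal hdS (hdd ▸ Submodule.zero_mem _) T
  | zero => simp
  | add x y _ _ hx hy => rw [map_add]; exact Submodule.add_mem _ hx hy
  | smul c x _ hx => rw [map_smul]; exact Submodule.smul_mem _ c hx

end Ideal

section Grading

variable (R) in
abbrev osSpan (B : Set (Finset (Atoms L))) : Submodule R (OSModule R L) :=
  Finsupp.supported R R B

omit [Fintype L] in
theorem osSpan_eq_span (B : Set (Finset (Atoms L))) :
    osSpan R B = Submodule.span R (osE R L '' B) :=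
  Finsupp.supported_eq_span_single R B

omit [Fintype L] in
theorem osE_mem_osSpan {B : Set (Finset (Atoms L))} {S : Finset (Atoms L)} (h : S ∈ B) :
    osE R L S ∈ osSpan R B :=
  Finsupp.single_mem_supported R 1 h

omit [Fintype L] in
theorem map_osSpan_le {B B' : Set (Finset (Atoms L))} {f : OSModule R L →ₗ[R] OSModule R L}
    (h : ∀ S ∈ B, f (osE R L S) ∈ osSpan R B') : (osSpan R B).map f ≤ osSpan R B' := by
  rw [osSpan_eq_span, Submodule.map_span, Submodule.span_le]
  rintro _ ⟨_, ⟨S, hS, rfl⟩, rfl⟩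
  exact h S hS

theorem osMulLeft_osE_mem_osSpan {B : Set (Finset (Atoms L))} {T S : Finset (Atoms L)}
    (h : Disjoint T S → T ∪ S ∈ B) : osMulLeft R T (osE R L S) ∈ osSpan R B := by
  rw [osMulLeft_osE]
  split_ifs with hTS
  · exact Submodule.smul_mem _ _ (osE_mem_osSpan (h hTS))
  · exact Submodule.zero_mem _

theorem osDel_osE_mem_osSpan {B : Set (Finset (Atoms L))} {S : Finset (Atoms L)}
    (h : ∀ b ∈ S, S.erase b ∈ B) : osDel R L (osE R L S) ∈ osSpan R B := by
  rw [osDel_osE]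
  exact Submodule.sum_mem _ fun b hb => Submodule.smul_mem _ _ (osE_mem_osSpan (h b hb))

def bideg (S : Finset (Atoms L)) : L × ℕ := (S.sup fun a => a.val, S.card)

theorem map_osMulLeft_osSpan_bideg_le (T : Finset (Atoms L)) (l : L) (k : ℕ) :
    (osSpan R (bideg ⁻¹' {(l, k)})).map (osMulLeft R T) ≤
      osSpan R (bideg ⁻¹' {((T.sup fun a => a.val) ⊔ l, T.card + k)}) := by
  refine map_osSpan_le fun S hS => osMulLeft_osE_mem_osSpan fun hTS => ?_
  simp only [bideg, Set.mem_preimage, Set.mem_singleton_iff, Prod.mk.injEq] at hS ⊢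
  rw [Finset.sup_union, Finset.card_union_of_disjoint hTS, hS.1, hS.2]
  exact ⟨rfl, rfl⟩

variable (R) in
def osIdealHomogeneousElems (gl : GeometricLattice L) : Set (OSModule R L) :=
  {x | x ∈ osIdeal R L gl ∧ ∃ j, x ∈ osSpan R (bideg ⁻¹' {j})}

variable {gl : GeometricLattice L}

theorem osMulLeft_mem_span_osIdealHomogeneousElems (T : Finset (Atoms L)) {x : OSModule R L}
    (hx : x ∈ Submodule.span R (osIdealHomogeneousElems R gl)) :
    osMulLeft R T x ∈ Submodule.span R (osIdealHomogeneousElems R gl) := by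
  suffices h : (Submodule.span R (osIdealHomogeneousElems R gl)).map (osMulLeft R T) ≤
      Submodule.span R (osIdealHomogeneousElems R gl) from h ⟨x, hx, rfl⟩
  rw [Submodule.map_span, Submodule.span_le]
  rintro _ ⟨y, ⟨hyI, ⟨l, k⟩, hy⟩, rfl⟩
  exact Submodule.subset_span ⟨osMulLeft_mem_osIdeal T hyI, _,
    map_osMulLeft_osSpan_bideg_le T l k ⟨y, hy, rfl⟩⟩

theorem osDel_osE_mem_span_osIdealHomogeneousElems {S : Finset (Atoms L)}
    (hS : IsDepSet L gl S) :
    osDel R L (osE R L S) ∈ Submodule.span R (osIdealHomogeneousElems R gl) := by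
  induction S using Finset.strongInductionOn with
  | _ S ih =>
    by_cases hu : ∀ b ∈ S, ((S.erase b).sup fun a => a.val) = S.sup fun a => a.val
    · refine Submodule.subset_span ⟨osDel_mem_osIdeal (osE_mem_osIdeal hS), _,
        osDel_osE_mem_osSpan (B := bideg ⁻¹' {(S.sup fun a => a.val, S.card - 1)}) fun b hb => ?_⟩
      simp [bideg, hu b hb, Finset.card_erase_of_mem hb]
    push Not at hu
    obtain ⟨b, hb, hne⟩ := hu
    have hSb := hS.erase hb hne
    rw [osE_eq_smul_osMulLeft_erase hb, map_smul, osDel_osMulLeft_singleton]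
    refine Submodule.smul_mem _ _ (Submodule.sub_mem _ (Submodule.subset_span ?_)
      (osMulLeft_mem_span_osIdealHomogeneousElems _ (ih _ (Finset.erase_ssubset hb) hSb)))
    exact ⟨osE_mem_osIdeal hSb, _, osE_mem_osSpan rfl⟩

theorem osIdeal_isHomogeneous : Finsupp.IsHomogeneous bideg (osIdeal R L gl) := by
  have hI : osIdeal R L gl = Submodule.span R (osIdealHomogeneousElems R gl) := by
    refine le_antisymm (Submodule.span_le.2 ?_) (Submodule.span_le.2 fun x hx => hx.1)
    rintro _ ⟨T, S, hS, rfl⟩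
    exact osMulLeft_mem_span_osIdealHomogeneousElems T
      (osDel_osE_mem_span_osIdealHomogeneousElems hS)
  rw [hI]
  exact Finsupp.isHomogeneous_span fun g hg => hg.2

end Grading

section Concentration

variable {gl : GeometricLattice L}

theorem osSpan_bideg_eq_bot_of_lt_rk {l : L} {k : ℕ} (hk : k < gl.rk l) :
    osSpan R (bideg ⁻¹' {(l, k)}) = ⊥ := by
  have hempty : bideg ⁻¹' {(l, k)} = (∅ : Set (Finset (Atoms L))) := by
    refine Set.eq_empty_of_forall_notMem fun S hS => ?_
    simp only [bideg, Set.mem_preimage, Set.mem_singleton_iff, Prod.mk.injEq] at hS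
    have := gl.rk_sup_le_card S
    rw [hS.1, hS.2] at this
    omega
  rw [hempty]
  exact Finsupp.supported_empty

theorem osSpan_bideg_le_osIdeal_of_rk_lt {l : L} {k : ℕ} (hk : gl.rk l < k) :
    osSpan R (bideg ⁻¹' {(l, k)}) ≤ osIdeal R L gl := by
  rw [osSpan_eq_span, Submodule.span_le]
  rintro _ ⟨S, hS, rfl⟩
  simp only [bideg, Set.mem_preimage, Set.mem_singleton_iff, Prod.mk.injEq] at hS
  exact osE_mem_osIdeal (by rw [IsDepSet, hS.1, hS.2]; exact hk)

theorem map_mkQ_osSpan_bideg_eq_bot {l : L} {k : ℕ} (hk : k ≠ gl.rk l) :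
    (osSpan R (bideg ⁻¹' {(l, k)})).map (osIdeal R L gl).mkQ = ⊥ := by
  rcases hk.lt_or_gt with hk | hk
  · rw [osSpan_bideg_eq_bot_of_lt_rk hk, Submodule.map_bot]
  · rw [eq_bot_iff, Submodule.map_le_iff_le_comap, ← LinearMap.ker, Submodule.ker_mkQ]
    exact osSpan_bideg_le_osIdeal_of_rk_lt hk

theorem osPiece_eq_osSpan (l : L) :
    osPiece R L l =
      osSpan R (bideg ⁻¹'
        ↑(({l} : Finset L) ×ˢ Finset.range (Fintype.card (Atoms L) + 1) : Finset (L × ℕ))) := by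
  rw [osSpan_eq_span, osPiece]
  congr 1
  ext x
  simp [bideg, Finset.card_le_univ, eq_comm]

theorem osIdeal_le_osSpan_nonempty : osIdeal R L gl ≤ osSpan R {S | S.Nonempty} := by
  rw [osIdeal, Submodule.span_le]
  rintro _ ⟨T, S, hS, rfl⟩
  have hdel : osDel R L (osE R L S) ∈ osSpan R {S | S.Nonempty} :=
    osDel_osE_mem_osSpan fun b hb => by
      rw [Set.mem_ofPred_eq, ← Finset.card_pos, Finset.card_erase_of_mem hb]
      have := hS.two_le_card
      omega
  exact map_osSpan_le (f := osMulLeft R T) (fun U hU => osMulLeft_osE_mem_osSpan fun _ =>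
    hU.mono Finset.subset_union_right) ⟨_, hdel, rfl⟩

variable (R) in
abbrev osSpanLE (q : L) (k : ℕ) : Submodule R (OSModule R L) :=
  osSpan R (bideg ⁻¹' ↑(Finset.univ.filter (· ≤ q) ×ˢ {k} : Finset (L × ℕ)))

theorem map_osMulLeft_osSpanLE_le {q : L} {a : Atoms L} (ha : a.val ≤ q) (k : ℕ) :
    (osSpanLE R q k).map (osMulLeft R {a}) ≤ osSpanLE R q (k + 1) := by
  refine map_osSpan_le fun S hS => osMulLeft_osE_mem_osSpan fun haS => ?_
  simp only [bideg, Set.mem_preimage, Finset.coe_product, Set.mem_prod, Finset.coe_filter,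
    Finset.mem_univ, true_and, Set.mem_ofPred_eq, Finset.coe_singleton,
    Set.mem_singleton_iff] at hS ⊢
  rw [Finset.sup_union, Finset.sup_singleton, Finset.card_union_of_disjoint haS,
    Finset.card_singleton, hS.2]
  exact ⟨sup_le ha hS.1, add_comm 1 k⟩

theorem map_osDel_osSpanLE_le (q : L) (k : ℕ) :
    (osSpanLE R q (k + 1)).map (osDel R L) ≤ osSpanLE R q k := by
  refine map_osSpan_le fun S hS => osDel_osE_mem_osSpan fun b hb => ?_
  simp only [bideg, Set.mem_preimage, Finset.coe_product, Set.mem_prod, Finset.coe_filter,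
    Finset.mem_univ, true_and, Set.mem_ofPred_eq, Finset.coe_singleton,
    Set.mem_singleton_iff] at hS ⊢
  rw [Finset.card_erase_of_mem hb, hS.2]
  exact ⟨(Finset.sup_mono (Finset.erase_subset b S)).trans hS.1, rfl⟩

theorem map_osDel_osSpanLE_zero (q : L) : (osSpanLE R q 0).map (osDel R L) = ⊥ := by
  refine eq_bot_iff.2 ((map_osSpan_le (B' := ∅) fun S hS =>
    osDel_osE_mem_osSpan fun b hb => ?_).trans Finsupp.supported_empty.le)
  simp only [bideg, Set.mem_preimage, Finset.coe_product, Set.mem_prod,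
    Finset.coe_singleton, Set.mem_singleton_iff, Finset.card_eq_zero] at hS
  simp [hS.2] at hb

theorem osSpanLE_eq_bot (q : L) : osSpanLE R q (Fintype.card (Atoms L) + 1) = ⊥ := by
  have hempty : bideg ⁻¹' ↑(Finset.univ.filter (· ≤ q) ×ˢ {Fintype.card (Atoms L) + 1} :
      Finset (L × ℕ)) = (∅ : Set (Finset (Atoms L))) := by
    refine Set.eq_empty_of_forall_notMem fun S hS => ?_
    simp only [bideg, Set.mem_preimage, Finset.coe_product, Set.mem_prod,
      Finset.coe_singleton, Set.mem_singleton_iff] at hS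
    have := S.card_le_univ
    omega
  rw [osSpanLE, hempty]
  exact Finsupp.supported_empty

end Concentration

section Dimension

variable {K : Type*} [Field K] {gl : GeometricLattice L}

theorem finrank_map_mkQ_osSpan_bideg (s : Finset (L × ℕ)) :
    finrank K ((osSpan K (bideg ⁻¹' s)).map (osIdeal K L gl).mkQ) =
      ∑ j ∈ s, finrank K ((osSpan K (bideg ⁻¹' {j})).map (osIdeal K L gl).mkQ) :=
  Finsupp.finrank_map_mkQ_supported osIdeal_isHomogeneous s

theorem neg_one_pow_rk_mul_finrank_osPiece (l : L) :
    (-1 : ℤ) ^ gl.rk l * finrank K ((osPiece K L l).map (osIdeal K L gl).mkQ) =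
      ∑ k ∈ Finset.range (Fintype.card (Atoms L) + 1),
        (-1 : ℤ) ^ k * finrank K ((osSpan K (bideg ⁻¹' {(l, k)})).map (osIdeal K L gl).mkQ) := by
  rw [osPiece_eq_osSpan, finrank_map_mkQ_osSpan_bideg,
    Finset.sum_product, Finset.sum_singleton, Nat.cast_sum, Finset.mul_sum]
  refine Finset.sum_congr rfl fun k _ => ?_
  rcases eq_or_ne k (gl.rk l) with rfl | hk
  · rfl
  · rw [map_mkQ_osSpan_bideg_eq_bot hk, finrank_bot, Nat.cast_zero, mul_zero, mul_zero]

theorem finrank_osPiece_bot : finrank K ((osPiece K L ⊥).map (osIdeal K L gl).mkQ) = 1 := by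
  have hpiece : osPiece K L ⊥ = K ∙ osE K L ∅ := by
    have hjoin (S : Finset (Atoms L)) : (S.sup fun a => a.val) = ⊥ ↔ S = ∅ := by
      simp [Finset.sup_eq_bot_iff, Finset.eq_empty_iff_forall_notMem, fun a : Atoms L => a.2.1]
    rw [osPiece]
    congr 1
    ext x
    simp [hjoin]
  have hne : osE K L ∅ ∉ osIdeal K L gl := fun h => by
    have := (Finsupp.mem_supported' K _).1 (osIdeal_le_osSpan_nonempty h) ∅ (by simp)
    simp [osE] at this
  rw [hpiece, Submodule.map_span, Set.image_singleton, finrank_span_singleton]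
  rwa [Submodule.mkQ_apply, ne_eq, Submodule.Quotient.mk_eq_zero]

theorem finrank_map_mkQ_osSpanLE (q : L) (k : ℕ) :
    finrank K ((osSpanLE K q k).map (osIdeal K L gl).mkQ) =
      ∑ l ∈ Finset.univ.filter (· ≤ q),
        finrank K ((osSpan K (bideg ⁻¹' {(l, k)})).map (osIdeal K L gl).mkQ) := by
  rw [osSpanLE, finrank_map_mkQ_osSpan_bideg, Finset.sum_product]
  simp only [Finset.sum_singleton]

theorem sum_neg_one_pow_mul_finrank_map_mkQ_osSpanLE {q : L} (hq : q ≠ ⊥) :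
    ∑ k ∈ Finset.range (Fintype.card (Atoms L) + 1),
      (-1 : ℤ) ^ k * finrank K ((osSpanLE K q k).map (osIdeal K L gl).mkQ) = 0 := by
  obtain ⟨A, hA, rfl⟩ := gl.atomistic q hq
  obtain ⟨a, haA⟩ : A.Nonempty := Finset.nonempty_iff_ne_empty.2 (by rintro rfl; simp at hq)
  let a' : Atoms L := ⟨a, hA a haA⟩
  have ha' : a'.val ≤ A.sup id := Finset.le_sup (f := id) haA
  let I := osIdeal K L gl
  let d := I.mapQ I (osDel K L) fun _ => osDel_mem_osIdeal
  let h := I.mapQ I (osMulLeft K {a'}) fun _ => osMulLeft_mem_osIdeal _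
  have hdh : d ∘ₗ h + h ∘ₗ d = LinearMap.id := by
    refine Submodule.linearMap_qext _ (LinearMap.ext fun x => ?_)
    simp only [LinearMap.comp_apply, LinearMap.add_apply, Submodule.mkQ_apply,
      Submodule.mapQ_apply, LinearMap.id_apply, d, h, ← Submodule.Quotient.mk_add]
    rw [← LinearMap.comp_apply, ← LinearMap.comp_apply (osMulLeft K {a'}), ← LinearMap.add_apply,
      osDel_comp_osMulLeft_add, LinearMap.id_apply]
  have hh : h ∘ₗ h = 0 := by
    refine Submodule.linearMap_qext _ (LinearMap.ext fun x => ?_)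
    simp only [LinearMap.comp_apply, Submodule.mkQ_apply, Submodule.mapQ_apply, h,
      LinearMap.zero_apply]
    rw [← LinearMap.comp_apply, osMulLeft_comp_osMulLeft_of_not_disjoint (by simp),
      LinearMap.zero_apply, Submodule.Quotient.mk_zero]
  refine sum_range_neg_one_pow_mul_finrank_eq_zero hdh hh (fun k => ?_) (fun k => ?_) ?_ ?_
  · rw [Submodule.map_mapQ_map_mkQ]
    exact Submodule.map_mono (map_osMulLeft_osSpanLE_le ha' k)
  · rw [Submodule.map_mapQ_map_mkQ]
    exact Submodule.map_mono (map_osDel_osSpanLE_le _ k)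
  · rw [Submodule.map_mapQ_map_mkQ, map_osDel_osSpanLE_zero, Submodule.map_bot]
  · rw [osSpanLE_eq_bot, Submodule.map_bot]

theorem sum_neg_one_pow_rk_mul_finrank_osPiece_eq_zero {q : L} (hq : q ≠ ⊥) :
    ∑ l ∈ Finset.univ.filter (· ≤ q),
      (-1 : ℤ) ^ gl.rk l * finrank K ((osPiece K L l).map (osIdeal K L gl).mkQ) = 0 := by
  simp_rw [neg_one_pow_rk_mul_finrank_osPiece]
  rw [Finset.sum_comm, ← sum_neg_one_pow_mul_finrank_map_mkQ_osSpanLE (K := K) (gl := gl) hq]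
  refine Finset.sum_congr rfl fun k _ => ?_
  rw [← Finset.mul_sum, finrank_map_mkQ_osSpanLE, Nat.cast_sum]

end Dimension

/-- For the Orlik–Solomon algebra of a finite geometric lattice over a field `K`,
the dimension of the homogeneous component `A^*(L)_p` (the image of the span of
the monomials `e_S` with `⋁ S = p` in the quotient `E^*(L)/I(L)`) equals
`(-1)^{rk p} μ(0, p)`, where `μ` is the Möbius function of `L`, characterized by
`μ(0, ⊥) = 1` and `∑_{l ≤ q} μ(0, l) = 0` for all `q ≠ ⊥`. -/
theorem finrank_osPiece_eq_moebius {K : Type*} [Field K]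
    {L' : Type*} [Lattice L'] [OrderBot L'] [Fintype L']
    (gl : GeometricLattice L') (μ : L' → ℤ)
    (hμ_bot : μ ⊥ = 1)
    (hμ_sum : ∀ q : L', q ≠ ⊥ →
      ∑ l ∈ Finset.univ.filter (fun l : L' => l ≤ q), μ l = 0)
    (p : L') :
    (Module.finrank K
        (Submodule.map (osIdeal K L' gl).mkQ (osPiece K L' p)) : ℤ) =
      (-1 : ℤ) ^ gl.rk p * μ p := by
  have hν := eq_of_eq_bot_of_sum_filter_le_eq_zero
    (f := fun l => (-1 : ℤ) ^ gl.rk l * finrank K ((osPiece K L' l).map (osIdeal K L' gl).mkQ))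
    (by simp [finrank_osPiece_bot, gl.rk_bot, hμ_bot])
    (fun q hq => sum_neg_one_pow_rk_mul_finrank_osPiece_eq_zero hq) hμ_sum
  rw [← congrFun hν p, ← mul_assoc, ← pow_add, Even.neg_one_pow ⟨_, rfl⟩, one_mul]
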